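/- arXiv:1507.08181 — 3 statements merged into one kernel-verified Lean document; each statement's English description precedes it below -/
import Mathlib

section
/- Let f ∈ ℂ[x,y], and let g ∈ ℂ[x] and k ∈ ℂ[y] be squarefree polynomials. Then Z(g) × Z(k) ⊆ Z(f) if and only if there exist h, l ∈ ℂ[x,y] such that f = g(x)·h(x,y) + k(y)·l(x,y). -/
/-!
A squarefree polynomial over an algebraically closed field is, up to its leading coefficient,
the product of `X - a` over its roots. Hence `g(x)` and `k(y)` generate the same ideal as
`∏_{g(a)=0} (x - a)` and `∏_{k(b)=0} (y - b)`, and a polynomial vanishing on the grid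
`Z(g) × Z(k)` lies in that ideal by Alon's Combinatorial Nullstellensatz. When a grid factor is
empty, the corresponding polynomial is a nonzero constant and the ideal is the whole ring.
-/

open MvPolynomial

theorem Polynomial.Splits.eq_C_leadingCoeff_mul_prod_roots_toFinset {R : Type*} [CommRing R]
    [IsDomain R] [DecidableEq R] {p : Polynomial R} (hp : p.Splits) (hnd : p.roots.Nodup) :
    p = C p.leadingCoeff * ∏ a ∈ p.roots.toFinset, (X - C a) := by
  rw [Finset.prod_eq_multiset_prod, Multiset.toFinset_val, Multiset.dedup_eq_self.2 hnd]
  exact hp.eq_prod_roots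

namespace MvPolynomial

variable {R σ : Type*}

theorem eval_aeval_X [CommRing R] (p : Polynomial R) (i : σ) (x : σ → R) :
    eval x (Polynomial.aeval (X i : MvPolynomial σ R) p) = p.eval (x i) := by
  simpa using (Polynomial.aeval_algHom_apply (aeval x) (X i) p).symm

theorem aeval_X_eq_C_leadingCoeff_mul_prod_roots_toFinset [CommRing R] [IsDomain R]
    [DecidableEq R] {p : Polynomial R} (hp : p.Splits) (hnd : p.roots.Nodup) (i : σ) :
    Polynomial.aeval (X i : MvPolynomial σ R) p =
      C p.leadingCoeff * ∏ a ∈ p.roots.toFinset, (X i - C a) := by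
  conv_lhs => rw [hp.eq_C_leadingCoeff_mul_prod_roots_toFinset hnd]
  simp only [map_mul, Polynomial.aeval_C, algebraMap_eq, map_prod, Polynomial.aeval_sub,
    Polynomial.aeval_X]

theorem eval_eq_zero_of_mem_span_aeval_X [CommRing R] {p : σ → Polynomial R}
    {f : MvPolynomial σ R} (hf : f ∈ Ideal.span (Set.range fun i ↦ Polynomial.aeval (X i) (p i)))
    {x : σ → R} (hx : ∀ i, (p i).eval (x i) = 0) : eval x f = 0 := by
  suffices Ideal.span (Set.range fun i ↦ Polynomial.aeval (X i) (p i)) ≤ RingHom.ker (eval x) from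
    this hf
  rw [Ideal.span_le]
  rintro _ ⟨i, rfl⟩
  simp [eval_aeval_X, hx i]

theorem mem_span_aeval_X_of_eval_eq_zero [Field R] [IsAlgClosed R] [Finite σ]
    {p : σ → Polynomial R} (hp : ∀ i, Squarefree (p i)) {f : MvPolynomial σ R}
    (hf : ∀ x : σ → R, (∀ i, (p i).eval (x i) = 0) → eval x f = 0) :
    f ∈ Ideal.span (Set.range fun i ↦ Polynomial.aeval (X i) (p i)) := by
  classical
  set I := Ideal.span (Set.range fun i ↦ Polynomial.aeval (X i : MvPolynomial σ R) (p i))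
  set S := fun i ↦ (p i).roots.toFinset
  have mem_S_iff : ∀ i a, a ∈ S i ↔ (p i).eval a = 0 := fun i a ↦ by
    simp [S, (hp i).ne_zero]
  have prod_mem : ∀ i, ∏ a ∈ S i, (X i - C a) ∈ I := fun i ↦ by
    have hnd := Polynomial.nodup_roots (PerfectField.separable_iff_squarefree.2 (hp i))
    have hlc : (p i).leadingCoeff ≠ 0 := Polynomial.leadingCoeff_ne_zero.2 (hp i).ne_zero
    have hprod : ∏ a ∈ S i, (X i - C a) =
        C (p i).leadingCoeff⁻¹ * Polynomial.aeval (X i) (p i) := by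
      rw [aeval_X_eq_C_leadingCoeff_mul_prod_roots_toFinset (IsAlgClosed.splits _) hnd,
        ← mul_assoc, ← C_mul, inv_mul_cancel₀ hlc, C_1, one_mul]
    rw [hprod]
    exact I.mul_mem_left _ (Ideal.subset_span ⟨i, rfl⟩)
  by_cases hne : ∀ i, (S i).Nonempty
  · obtain ⟨h, -, rfl⟩ := combinatorial_nullstellensatz_exists_linearCombination S hne f
      fun x hx ↦ hf x fun i ↦ (mem_S_iff i (x i)).1 (hx i)
    apply Ideal.span_le.2 (Set.range_subset_iff.2 prod_mem)
    rw [Ideal.span, ← Finsupp.range_linearCombination]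
    exact LinearMap.mem_range_self _ h
  · obtain ⟨i, hi⟩ := not_forall.1 hne
    have one_mem := prod_mem i
    rw [Finset.not_nonempty_iff_eq_empty.1 hi, Finset.prod_empty] at one_mem
    simpa using I.mul_mem_left f one_mem

theorem mem_span_aeval_X_iff [Field R] [IsAlgClosed R] [Finite σ] {p : σ → Polynomial R}
    (hp : ∀ i, Squarefree (p i)) (f : MvPolynomial σ R) :
    f ∈ Ideal.span (Set.range fun i ↦ Polynomial.aeval (X i) (p i)) ↔
      ∀ x : σ → R, (∀ i, (p i).eval (x i) = 0) → eval x f = 0 :=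
  ⟨fun hf _ hx ↦ eval_eq_zero_of_mem_span_aeval_X hf hx, mem_span_aeval_X_of_eval_eq_zero hp⟩

end MvPolynomial

/-- Special case of Alon's combinatorial Nullstellensatz: for `f ∈ ℂ[x,y]` and squarefree
`g ∈ ℂ[x]`, `k ∈ ℂ[y]`, we have `Z(g) × Z(k) ⊆ Z(f)` if and only if
`f = g(x)·h(x,y) + k(y)·l(x,y)` for some `h, l ∈ ℂ[x,y]`. -/
theorem alon_nullstellensatz_two_vars
    (f : MvPolynomial (Fin 2) ℂ) (g k : Polynomial ℂ)
    (hg : Squarefree g) (hk : Squarefree k) :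
    (∀ a b : ℂ, g.eval a = 0 → k.eval b = 0 → eval ![a, b] f = 0) ↔
      ∃ h l : MvPolynomial (Fin 2) ℂ,
        f = Polynomial.aeval (X 0 : MvPolynomial (Fin 2) ℂ) g * h
            + Polynomial.aeval (X 1 : MvPolynomial (Fin 2) ℂ) k * l := by
  have hspan : Ideal.span (Set.range fun i ↦ Polynomial.aeval (X i) (![g, k] i)) =
      Ideal.span {Polynomial.aeval (X 0 : MvPolynomial (Fin 2) ℂ) g,
        Polynomial.aeval (X 1) k} := by
    congr 1
    ext
    simp [Fin.exists_fin_two, eq_comm]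
  calc _ ↔ ∀ x : Fin 2 → ℂ, (∀ i, (![g, k] i).eval (x i) = 0) → eval x f = 0 := by
        simp [Fin.forall_fin_succ_pi, Fin.forall_fin_zero_pi]
    _ ↔ f ∈ Ideal.span (Set.range fun i ↦ Polynomial.aeval (X i) (![g, k] i)) :=
        (mem_span_aeval_X_iff (Fin.forall_fin_two.2 ⟨hg, hk⟩) f).symm
    _ ↔ _ := by
        rw [hspan, Ideal.mem_span_pair]
        simp [eq_comm, mul_comm]
end

section
/- Let F ∈ ℂ[x,y,s,t], and let G ∈ ℂ[x,y] and K ∈ ℂ[s,t] be non-constant squarefree polynomials. Then Z(G) × Z(K) ⊆ Z(F) if and only if F is (G,K)-Cartesian, i.e., there exist H, L ∈ ℂ[x,y,s,t] such that F(x,y,s,t) = G(x,y)·H(x,y,s,t) + K(s,t)·L(x,y,s,t). -/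
/-!
Write `k[σ ⊕ τ] = k[τ][σ]` and reduce the coefficients modulo `K`, landing in `B[σ]` with
`B = k[τ] ⧸ (K)`. If `G(v) = 0`, the specialisation `F(v, ·)` vanishes on `Z(K)`, so `K` divides
it by the Nullstellensatz (`K` being squarefree, `(K)` is radical); that is, the image of `F`
in `B[σ]` vanishes at `v`. Expanding this image in a `k`-basis of `B`, every coordinate
polynomial vanishes on `Z(G)` and is therefore divisible by `G`. Hence `F ≡ G·H` modulo `K`.
-/

open MvPolynomial

/-- Regard `G ∈ ℂ[x,y]` as a polynomial in `x,y,s,t`. -/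
noncomputable def liftXY (p : MvPolynomial (Fin 2) ℂ) : MvPolynomial (Fin 4) ℂ :=
  rename (fun i : Fin 2 => (⟨i.val, by omega⟩ : Fin 4)) p

/-- Regard `K ∈ ℂ[s,t]` as a polynomial in `x,y,s,t`. -/
noncomputable def liftST (p : MvPolynomial (Fin 2) ℂ) : MvPolynomial (Fin 4) ℂ :=
  rename (fun i : Fin 2 => (⟨i.val + 2, by omega⟩ : Fin 4)) p

namespace MvPolynomial

theorem dvd_of_forall_eval_eq_zero {k σ : Type*} [Field k] [IsAlgClosed k] [Finite σ]
    {G : MvPolynomial σ k} (hG : Squarefree G) {c : MvPolynomial σ k}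
    (h : ∀ v : σ → k, eval v G = 0 → eval v c = 0) : G ∣ c := by
  have hc : c ∈ vanishingIdeal k (zeroLocus k (Ideal.span {G})) :=
    fun v hv => h v (hv G (Ideal.subset_span rfl))
  rw [vanishingIdeal_zeroLocus_eq_radical] at hc
  obtain ⟨n, hn⟩ := hc
  exact hG.isRadical n c (Ideal.mem_span_singleton.mp hn)

theorem map_mk_span_singleton_eq_zero_iff {R σ : Type*} [CommRing R] (a : R)
    (p : MvPolynomial σ R) : map (Ideal.Quotient.mk (Ideal.span {a})) p = 0 ↔ C a ∣ p := by
  rw [← RingHom.mem_ker, ker_map, Ideal.mk_ker, Ideal.map_span, Set.image_singleton,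
    Ideal.mem_span_singleton]

section BasisExpansion

variable {k B ι τ : Type*} [Field k] [CommRing B] [Algebra k B]

theorem exists_eq_finsuppSum_C_mul_map (b : Module.Basis ι k B) (P : MvPolynomial τ B) :
    ∃ c : ι →₀ MvPolynomial τ k, P = c.sum fun i q => C (b i) * map (algebraMap k B) q := by
  induction P using MvPolynomial.induction_on' with
  | monomial n a =>
    refine ⟨(b.repr a).mapRange (monomial n) (map_zero _), ?_⟩
    rw [Finsupp.sum_mapRange_index (by simp)]
    conv_lhs => rw [← b.linearCombination_repr a, Finsupp.linearCombination_apply]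
    simp only [Finsupp.sum, map_sum, map_monomial, C_mul_monomial, Algebra.smul_def,
      mul_comm (b _)]
  | add P Q hP hQ =>
    obtain ⟨c, rfl⟩ := hP
    obtain ⟨d, rfl⟩ := hQ
    exact ⟨c + d, (Finsupp.sum_add_index' (by simp) (by simp [mul_add])).symm⟩

theorem eval_finsuppSum_C_mul_map (b : ι → B) (c : ι →₀ MvPolynomial τ k) (v : τ → k) :
    eval (algebraMap k B ∘ v) (c.sum fun i q => C (b i) * map (algebraMap k B) q) =
      Finsupp.linearCombination k b (c.mapRange (eval v) (map_zero _)) := by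
  rw [Finsupp.linearCombination_apply, Finsupp.sum_mapRange_index (by simp)]
  simp only [Finsupp.sum, map_sum, map_mul, eval_C, ← map_eval, Algebra.smul_def, mul_comm]

theorem map_dvd_of_forall_eval_eq_zero [IsAlgClosed k] [Finite τ] {G : MvPolynomial τ k}
    (hG : Squarefree G) {P : MvPolynomial τ B}
    (h : ∀ v : τ → k, eval v G = 0 → eval (algebraMap k B ∘ v) P = 0) :
    map (algebraMap k B) G ∣ P := by
  let b := Module.Basis.ofVectorSpace k B
  obtain ⟨c, rfl⟩ := exists_eq_finsuppSum_C_mul_map b P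
  have hc : ∀ i v, eval v G = 0 → eval v (c i) = 0 := fun i v hv => by
    have := h v hv
    rw [eval_finsuppSum_C_mul_map, ← map_zero (Finsupp.linearCombination k b)] at this
    simpa using DFunLike.congr_fun (b.linearIndependent this) i
  exact Finset.dvd_sum fun i _ =>
    dvd_mul_of_dvd_right (map_dvd _ (dvd_of_forall_eval_eq_zero hG (hc i))) _

end BasisExpansion

section SumVariables

variable {R σ τ : Type*} [CommSemiring R]

theorem sumAlgEquiv_rename_inl (p : MvPolynomial σ R) :
    sumAlgEquiv R σ τ (rename Sum.inl p) = map C p := by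
  induction p using MvPolynomial.induction_on <;> simp_all

theorem sumAlgEquiv_rename_inr (p : MvPolynomial τ R) :
    sumAlgEquiv R σ τ (rename Sum.inr p) = C p := by
  induction p using MvPolynomial.induction_on <;> simp_all

theorem eval_eval_sumAlgEquiv (v : σ → R) (w : τ → R) (F : MvPolynomial (σ ⊕ τ) R) :
    eval w (eval (C ∘ v) (sumAlgEquiv R σ τ F)) = eval (Sum.elim v w) F := by
  induction F using MvPolynomial.induction_on with
  | C a => simp
  | add p q hp hq => simp [hp, hq]
  | mul_X p i hp => cases i <;> simp [hp]

end SumVariables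

variable {k σ τ : Type*} [Field k] [IsAlgClosed k] [Finite σ] [Finite τ]
  {G : MvPolynomial σ k} {K : MvPolynomial τ k}

theorem map_dvd_map_mk_sumAlgEquiv_of_forall_eval_sumElim_eq_zero (hG : Squarefree G)
    (hK : Squarefree K) {F : MvPolynomial (σ ⊕ τ) k}
    (h : ∀ v w, eval v G = 0 → eval w K = 0 → eval (Sum.elim v w) F = 0) :
    map (algebraMap k (MvPolynomial τ k ⧸ Ideal.span {K})) G ∣
      map (Ideal.Quotient.mk (Ideal.span {K})) (sumAlgEquiv k σ τ F) := by
  refine map_dvd_of_forall_eval_eq_zero hG fun v hv => ?_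
  have hK : K ∣ eval (C ∘ v) (sumAlgEquiv k σ τ F) :=
    dvd_of_forall_eval_eq_zero hK fun w hw => by rw [eval_eval_sumAlgEquiv]; exact h v w hv hw
  rwa [show algebraMap k _ ∘ v = Ideal.Quotient.mk _ ∘ C ∘ v from rfl, ← map_eval,
    Ideal.Quotient.eq_zero_iff_dvd]

theorem mem_span_rename_inl_rename_inr_iff (hG : Squarefree G) (hK : Squarefree K)
    (F : MvPolynomial (σ ⊕ τ) k) :
    F ∈ Ideal.span {rename Sum.inl G, rename Sum.inr K} ↔
      ∀ v w, eval v G = 0 → eval w K = 0 → eval (Sum.elim v w) F = 0 := by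
  constructor
  · rintro hF v w hv hw
    obtain ⟨H, L, rfl⟩ := Ideal.mem_span_pair.mp hF
    simp [eval_rename, hv, hw]
  · intro h
    let e := sumAlgEquiv k σ τ
    obtain ⟨Q, hQ⟩ := map_dvd_map_mk_sumAlgEquiv_of_forall_eval_sumElim_eq_zero hG hK h
    obtain ⟨W, rfl⟩ := map_surjective _ Ideal.Quotient.mk_surjective Q
    obtain ⟨L, hL⟩ : C K ∣ e F - map C G * W := by
      rw [← map_mk_span_singleton_eq_zero_iff, map_sub, map_mul, map_map, hQ]
      exact sub_self _
    refine Ideal.mem_span_pair.mpr ⟨e.symm W, e.symm L, e.injective ?_⟩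
    rw [map_add, map_mul, map_mul, sumAlgEquiv_rename_inl, sumAlgEquiv_rename_inr,
      e.apply_symm_apply, e.apply_symm_apply]
    linear_combination -hL

end MvPolynomial

theorem vec4_comp_finSumFinEquiv {α : Type*} (a b c d : α) :
    ![a, b, c, d] ∘ finSumFinEquiv = Sum.elim ![a, b] ![c, d] := by
  ext (i | i) <;> fin_cases i <;> rfl

theorem rename_finSumFinEquiv_rename_inl (G : MvPolynomial (Fin 2) ℂ) :
    rename finSumFinEquiv (rename (Sum.inl : _ → Fin 2 ⊕ Fin 2) G) = liftXY G := by
  rw [rename_rename]; rfl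

theorem rename_finSumFinEquiv_rename_inr (K : MvPolynomial (Fin 2) ℂ) :
    rename finSumFinEquiv (rename (Sum.inr : _ → Fin 2 ⊕ Fin 2) K) = liftST K := by
  rw [rename_rename, liftST]
  congr
  ext i
  simp only [Function.comp_apply, finSumFinEquiv_apply_right, Fin.val_natAdd]
  omega

theorem nullstellensatz_two_dim_products_general
    (F : MvPolynomial (Fin 4) ℂ) (G K : MvPolynomial (Fin 2) ℂ)
    (hGsf : Squarefree G) (hKsf : Squarefree K) :
    (∀ p q : ℂ × ℂ, eval ![p.1, p.2] G = 0 → eval ![q.1, q.2] K = 0 →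
        eval ![p.1, p.2, q.1, q.2] F = 0) ↔
      ∃ H L : MvPolynomial (Fin 4) ℂ, F = liftXY G * H + liftST K * L := by
  let e : MvPolynomial (Fin 2 ⊕ Fin 2) ℂ ≃ₐ[ℂ] MvPolynomial (Fin 4) ℂ :=
    renameEquiv ℂ finSumFinEquiv
  obtain ⟨F, rfl⟩ := e.surjective F
  have hspan : Ideal.span {liftXY G, liftST K} =
      Ideal.map e (Ideal.span {rename Sum.inl G, rename Sum.inr K}) := by
    rw [Ideal.map_span, Set.image_pair, ← rename_finSumFinEquiv_rename_inl,
      ← rename_finSumFinEquiv_rename_inr]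
    rfl
  have hcartesian : (∃ H L, e F = liftXY G * H + liftST K * L) ↔
      e F ∈ Ideal.span {liftXY G, liftST K} := by
    simp_rw [Ideal.mem_span_pair, eq_comm (a := e F), mul_comm]
  rw [hcartesian, hspan, Ideal.mem_map_of_equiv]
  simp only [e.injective.eq_iff, exists_eq_right]
  rw [mem_span_rename_inl_rename_inr_iff hGsf hKsf]
  simp only [(finTwoArrowEquiv ℂ).forall_congr_left, finTwoArrowEquiv_symm_apply, e,
    renameEquiv_apply, eval_rename, vec4_comp_finSumFinEquiv]

/-- First Nullstellensatz for two-dimensional products: for `F ∈ ℂ[x,y,s,t]` and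
non-constant squarefree `G ∈ ℂ[x,y]`, `K ∈ ℂ[s,t]`, we have `Z(G) × Z(K) ⊆ Z(F)`
if and only if `F` is `(G,K)`-Cartesian, i.e.
`F = G(x,y)·H(x,y,s,t) + K(s,t)·L(x,y,s,t)` for some `H, L`. -/
theorem nullstellensatz_two_dim_products
    (F : MvPolynomial (Fin 4) ℂ) (G K : MvPolynomial (Fin 2) ℂ)
    (hG : G.totalDegree ≠ 0) (hK : K.totalDegree ≠ 0)
    (hGsf : Squarefree G) (hKsf : Squarefree K) :
    (∀ p q : ℂ × ℂ, eval ![p.1, p.2] G = 0 → eval ![q.1, q.2] K = 0 →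
        eval ![p.1, p.2, q.1, q.2] F = 0) ↔
      ∃ H L : MvPolynomial (Fin 4) ℂ, F = liftXY G * H + liftST K * L :=
  nullstellensatz_two_dim_products_general F G K hGsf hKsf
end

section
/- Let F(x,y,s,t) = x·s − y + t ∈ ℂ[x,y,s,t]. Then F is not Cartesian: there do not exist non-constant G ∈ ℂ[x,y], K ∈ ℂ[s,t] and H, L ∈ ℂ[x,y,s,t] with F = G·H + K·L. -/
/-!
If `F = x s - y + t = G H + K L`, then every zero `p` of `G` and every zero `l` of `K` satisfy
`F(p, l) = 0`: the point `p` lies on the line `y = l₀ x + l₁`. A non-constant polynomial in two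
variables over `ℂ` has two distinct zeros (by the Nullstellensatz it has one; viewed as a
polynomial in the first variable, either its leading coefficient is non-zero at two points, or it
is constant in the first variable). But two distinct points lie on at most one non-vertical line.
-/

open MvPolynomial

/-- `F ∈ ℂ[x,y,s,t]` is Cartesian if `F = G·H + K·L` with `G ∈ ℂ[x,y]`, `K ∈ ℂ[s,t]`
non-constant. -/
def IsCartesian (F : MvPolynomial (Fin 4) ℂ) : Prop :=
  ∃ (G K : MvPolynomial (Fin 2) ℂ) (H L : MvPolynomial (Fin 4) ℂ),
    G.totalDegree ≠ 0 ∧ K.totalDegree ≠ 0 ∧ F = liftXY G * H + liftST K * L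

namespace MvPolynomial

theorem exists_eval_ne_zero {R σ : Type*} [CommRing R] [IsDomain R] [Infinite R]
    {f : MvPolynomial σ R} (hf : f ≠ 0) : ∃ x, eval x f ≠ 0 := by
  by_contra! h
  exact hf (funext (by simpa using h))

variable {k : Type*} [Field k] [IsAlgClosed k]

theorem exists_eval_eq_zero_of_totalDegree_ne_zero {σ : Type*} [Finite σ]
    {f : MvPolynomial σ k} (hf : f.totalDegree ≠ 0) : ∃ x, eval x f = 0 := by
  by_contra! h
  have hempty : zeroLocus k (Ideal.span {f}) = ∅ :=
    Set.eq_empty_of_forall_notMem fun x hx =>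
      h x (hx f (Ideal.subset_span rfl))
  have htop : (Ideal.span {f}).radical = ⊤ := by
    rw [← vanishingIdeal_zeroLocus_eq_radical (K := k), hempty, vanishingIdeal_empty]
  rw [Ideal.radical_eq_top, Ideal.span_singleton_eq_top,
    isUnit_iff_totalDegree_of_isReduced] at htop
  exact hf htop.2

theorem exists_eval_cons_eq_zero {n : ℕ} {f : MvPolynomial (Fin (n + 1)) k}
    (hf : 0 < (finSuccEquiv k n f).natDegree) {s : Fin n → k}
    (hs : eval s (finSuccEquiv k n f).leadingCoeff ≠ 0) :
    ∃ y, eval (Fin.cons y s) f = 0 := by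
  set q := finSuccEquiv k n f
  have hdeg : (q.map (eval s)).natDegree = q.natDegree :=
    Polynomial.natDegree_map_of_leadingCoeff_ne_zero _ hs
  obtain ⟨y, hy⟩ := IsAlgClosed.exists_root (q.map (eval s))
    (Polynomial.natDegree_pos_iff_degree_pos.mp (hdeg ▸ hf)).ne'
  exact ⟨y, by rwa [eval_eq_eval_mv_eval']⟩

theorem exists_two_eval_eq_zero_of_totalDegree_ne_zero {n : ℕ}
    {f : MvPolynomial (Fin (n + 2)) k} (hf : f.totalDegree ≠ 0) :
    ∃ x y, x ≠ y ∧ eval x f = 0 ∧ eval y f = 0 := by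
  set q := finSuccEquiv k (n + 1) f with hq
  rcases Nat.eq_zero_or_pos q.natDegree with hq0 | hqpos
  · have hb : (q.coeff 0).totalDegree ≠ 0 := by
      rw [Ne, totalDegree_eq_zero_iff_eq_C]
      intro hc
      apply hf
      have : f = C ((q.coeff 0).coeff 0) := by
        apply (finSuccEquiv k (n + 1)).injective
        rw [← hq, Polynomial.eq_C_of_natDegree_eq_zero hq0, hc]
        simp [finSuccEquiv_apply]
      rw [this, totalDegree_C]
    obtain ⟨s, hs⟩ := exists_eval_eq_zero_of_totalDegree_ne_zero hb
    have hzero (y : k) : eval (Fin.cons y s) f = 0 := by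
      rw [eval_eq_eval_mv_eval', ← hq, Polynomial.eq_C_of_natDegree_eq_zero hq0]
      simp [hs]
    exact ⟨Fin.cons 0 s, Fin.cons 1 s, by simp [Fin.cons_inj], hzero 0, hzero 1⟩
  · have hlc : q.leadingCoeff ≠ 0 := by
      rw [Ne, Polynomial.leadingCoeff_eq_zero]
      intro h
      simp [h] at hqpos
    obtain ⟨s₁, hs₁⟩ := exists_eval_ne_zero hlc
    -- the factor `X 0 - s₁ 0` forces `s₂ ≠ s₁`
    have hlin : (X 0 - C (s₁ 0) : MvPolynomial (Fin (n + 1)) k) ≠ 0 := fun h => by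
      simpa using congrArg (eval fun _ => s₁ 0 + 1) h
    obtain ⟨s₂, hs₂⟩ := exists_eval_ne_zero (mul_ne_zero hlc hlin)
    rw [eval_mul, mul_ne_zero_iff] at hs₂
    obtain ⟨y₁, hy₁⟩ := exists_eval_cons_eq_zero hqpos hs₁
    obtain ⟨y₂, hy₂⟩ := exists_eval_cons_eq_zero hqpos hs₂.1
    refine ⟨Fin.cons y₁ s₁, Fin.cons y₂ s₂, fun h => hs₂.2 ?_, hy₁, hy₂⟩
    rw [Fin.cons_inj] at h
    simp [h.2]

end MvPolynomial

/-- A line is encoded by its slope and intercept: `l = (c, d)` is the line `y = c x + d`. -/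
def LiesOn {k : Type*} [Semiring k] (p l : Fin 2 → k) : Prop :=
  p 1 = l 0 * p 0 + l 1

theorem eq_of_liesOn_of_liesOn {k : Type*} [CommRing k] [IsDomain k] {p p' l l' : Fin 2 → k}
    (hp : p ≠ p') (hpl : LiesOn p l) (hp'l : LiesOn p' l) (hpl' : LiesOn p l')
    (hp'l' : LiesOn p' l') : l = l' := by
  unfold LiesOn at *
  have hslope : (p 0 - p' 0) * (l 0 - l' 0) = 0 := by
    linear_combination hpl' - hp'l' - hpl + hp'l
  rcases mul_eq_zero.mp hslope with hx | hs
  · refine absurd ?_ hp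
    have hx : p 0 = p' 0 := sub_eq_zero.mp hx
    have hy : p 1 = p' 1 := by rw [hpl, hp'l, hx]
    ext i; fin_cases i <;> assumption
  · have hs : l 0 = l' 0 := sub_eq_zero.mp hs
    have ht : l 1 = l' 1 := by linear_combination hpl' - hpl - p 0 * hs
    ext i; fin_cases i <;> assumption

theorem eval_append_liftXY (x y : Fin 2 → ℂ) (p : MvPolynomial (Fin 2) ℂ) :
    eval (Fin.append x y) (liftXY p) = eval x p := by
  rw [liftXY, eval_rename]
  congr 2; funext i; fin_cases i <;> rfl

theorem eval_append_liftST (x y : Fin 2 → ℂ) (p : MvPolynomial (Fin 2) ℂ) :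
    eval (Fin.append x y) (liftST p) = eval y p := by
  rw [liftST, eval_rename]
  congr 2; funext i; fin_cases i <;> rfl

/-- The point-line incidence polynomial `F = x·s − y + t` is not Cartesian. -/
theorem incidence_polynomial_not_cartesian :
    ¬ IsCartesian (X 0 * X 2 - X 1 + X 3 : MvPolynomial (Fin 4) ℂ) := by
  rintro ⟨G, K, H, L, hG, hK, hF⟩
  have liesOn_of_zero {p l : Fin 2 → ℂ} (hp : eval p G = 0) (hl : eval l K = 0) :
      LiesOn p l := by
    have h := congrArg (eval (Fin.append p l)) hF
    simp only [eval_add, eval_mul, eval_sub, eval_X, eval_append_liftXY, eval_append_liftST, hp, hl,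
      zero_mul, add_zero] at h
    change p 0 * l 0 - p 1 + l 1 = 0 at h
    unfold LiesOn
    linear_combination -h
  obtain ⟨p, p', hpp', hp, hp'⟩ := exists_two_eval_eq_zero_of_totalDegree_ne_zero hG
  obtain ⟨l, l', hll', hl, hl'⟩ := exists_two_eval_eq_zero_of_totalDegree_ne_zero hK
  exact hll' (eq_of_liesOn_of_liesOn hpp' (liesOn_of_zero hp hl) (liesOn_of_zero hp' hl)
    (liesOn_of_zero hp hl') (liesOn_of_zero hp' hl'))
end
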